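/- Let (D,𝕋) be a symmetric and strongly temporalisable trip network with n nodes. Then there exists a schedule S of (D,𝕋) such that the S-reachability of (D,𝕋) is at least (2/9)·n². -/

import Mathlib

/-- A weighted directed edge of a weighted directed multigraph. -/
structure DEdge (V : Type) where
  tail : V
  head : V
  weight : ℝ

/-- A temporal edge: tail, head, starting time and (positive) travel time. -/
structure TEdge (V : Type) where
  tail : V
  head : V
  time : ℝ
  travel : ℝ

/-- A trip: a nonempty walk, i.e. consecutive edges match head-to-tail. -/
def IsWalk {V : Type} (T : List (DEdge V)) : Prop :=
  T ≠ [] ∧ T.Chain' fun e f => e.head = f.tail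

/-- A trip network: every trip is a walk with positive weights, and every node
appears in some trip (the edges of `D` are exactly the edges of the trips). -/
def IsTripNetwork {V : Type} (trips : List (List (DEdge V))) : Prop :=
  (∀ T ∈ trips, IsWalk T ∧ ∀ e ∈ T, 0 < e.weight) ∧
  ∀ v : V, ∃ T ∈ trips, ∃ e ∈ T, e.tail = v ∨ e.head = v

/-- A temporal path from `u` to `v` in the temporal graph `G`. -/
def IsTemporalPath {V : Type} (G : Set (TEdge V)) (p : List (TEdge V)) (u v : V) : Prop :=
  p ≠ [] ∧ (∀ f ∈ p, f ∈ G) ∧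
  (p.Chain' fun e f => e.head = f.tail ∧ e.time + e.travel ≤ f.time) ∧
  p.head?.map TEdge.tail = some u ∧ p.getLast?.map TEdge.head = some v

/-- Temporal reachability (every node temporally reaches itself). -/
def TReachable {V : Type} (G : Set (TEdge V)) (u v : V) : Prop :=
  u = v ∨ ∃ p, IsTemporalPath G p u v

/-- The temporal edges induced by a trip with starting time `t`. -/
def tripTEdges {V : Type} : List (DEdge V) → ℝ → List (TEdge V)
  | [], _ => []
  | e :: es, t => ⟨e.tail, e.head, t, e.weight⟩ :: tripTEdges es (t + e.weight)

/-- The temporal graph induced by a temporalisation `τ` assigning a starting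
time to each trip (index) of the collection. -/
def inducedTG {V : Type} (trips : List (List (DEdge V))) (τ : ℕ → ℝ) : Set (TEdge V) :=
  { f | ∃ i : Fin trips.length, f ∈ tripTEdges (trips.get i) (τ i.1) }

/-- The duration of a trip: the sum of the weights of its edges. -/
def tripDuration {V : Type} (T : List (DEdge V)) : ℝ :=
  (T.map DEdge.weight).sum

/-- Starting time of the `i`-th trip of a schedule: the sum of the durations of
the previous trips. -/
def scheduleTimes {V : Type} (S : List (List (DEdge V))) (i : ℕ) : ℝ :=
  ((S.take i).map tripDuration).sum

/-- The temporal graph induced by a schedule (an ordering of the trips). -/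
def scheduleTG {V : Type} (S : List (List (DEdge V))) : Set (TEdge V) :=
  inducedTG S (scheduleTimes S)

/-- The number of ordered pairs `(u, v)` of nodes such that `v` is temporally
reachable from `u` in `G`. -/
noncomputable def reachCount {V : Type} [Fintype V] (G : Set (TEdge V)) : ℕ :=
  Nat.card {p : V × V // TReachable G p.1 p.2}

/-- `(s,t)`-temporalisability. -/
def Temporalisable {V : Type} (trips : List (List (DEdge V))) (s t : V) : Prop :=
  ∃ τ : ℕ → ℝ, TReachable (inducedTG trips τ) s t

/-- Strong temporalisability. -/
def StronglyTemporalisable {V : Type} (trips : List (List (DEdge V))) : Prop :=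
  ∀ s t : V, Temporalisable trips s t

/-- The sequence of nodes visited by a trip. -/
def tripNodes {V : Type} (T : List (DEdge V)) : List V :=
  T.map DEdge.tail ++ (T.getLast?.map DEdge.head).toList

/-- A symmetric trip collection: the trips can be grouped into disjoint pairs
`(T, T̄)` where `T̄` visits the same nodes as `T` in reverse order. -/
def IsSymmetricTrips {V : Type} (trips : List (List (DEdge V))) : Prop :=
  ∃ ps : List (List (DEdge V) × List (DEdge V)),
    trips.Perm (ps.flatMap fun p => [p.1, p.2]) ∧
    ∀ p ∈ ps, tripNodes p.2 = (tripNodes p.1).reverse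

/-- Reachability by a walk in the underlying multidigraph. -/
def DReachable {V : Type} (trips : List (List (DEdge V))) (u v : V) : Prop :=
  Relation.ReflTransGen (fun a b => ∃ T ∈ trips, ∃ e ∈ T, e.tail = a ∧ e.head = b) u v

section Aux
variable {V : Type}

def RW (G : Set (TEdge V)) (t1 : ℝ) (u v : V) (t2 : ℝ) : Prop :=
  t1 ≤ t2 ∧ (u = v ∨
    ∃ p, IsTemporalPath G p u v ∧ ∀ f ∈ p, t1 ≤ f.time ∧ f.time + f.travel ≤ t2)

theorem RW.treach {G : Set (TEdge V)} {t1 t2 : ℝ} {u v : V} (h : RW G t1 u v t2) :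
    TReachable G u v := by
  rcases h.2 with rfl | ⟨p, hp, -⟩
  · exact Or.inl rfl
  · exact Or.inr ⟨p, hp⟩

theorem RW.mono {G : Set (TEdge V)} {t1 t2 t1' t2' : ℝ} {u v : V} (h : RW G t1 u v t2)
    (h1 : t1' ≤ t1) (h2 : t2 ≤ t2') : RW G t1' u v t2' := by
  refine ⟨le_trans h1 (le_trans h.1 h2), ?_⟩
  rcases h.2 with rfl | ⟨p, hp, ht⟩
  · exact Or.inl rfl
  · exact Or.inr ⟨p, hp, fun f hf => ⟨le_trans h1 (ht f hf).1, le_trans (ht f hf).2 h2⟩⟩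

theorem RW.refl {G : Set (TEdge V)} {t1 t2 : ℝ} (u : V) (h : t1 ≤ t2) : RW G t1 u u t2 :=
  ⟨h, Or.inl rfl⟩

theorem RW.trans {G : Set (TEdge V)} {t1 t2 t3 : ℝ} {u v w : V} (h : RW G t1 u v t2)
    (h' : RW G t2 v w t3) : RW G t1 u w t3 := by
  refine ⟨le_trans h.1 h'.1, ?_⟩
  rcases h.2 with rfl | ⟨p, hp, htp⟩
  · rcases h'.2 with rfl | ⟨q, hq, htq⟩
    · exact Or.inl rfl
    · exact Or.inr ⟨q, hq, fun f hf => ⟨le_trans h.1 (htq f hf).1, (htq f hf).2⟩⟩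
  · rcases h'.2 with rfl | ⟨q, hq, htq⟩
    · exact Or.inr ⟨p, hp, fun f hf => ⟨(htp f hf).1, le_trans (htp f hf).2 h'.1⟩⟩
    · obtain ⟨hpne, hpG, hpch, hph, hpl⟩ := hp
      obtain ⟨hqne, hqG, hqch, hqh, hql⟩ := hq
      refine Or.inr ⟨p ++ q, ⟨?_, ?_, ?_, ?_, ?_⟩, ?_⟩
      · simp [hpne]
      · intro f hf; rcases List.mem_append.1 hf with hm | hm
        · exact hpG f hm
        · exact hqG f hm
      · refine List.IsChain.append hpch hqch ?_
        intro x hx y hy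
        have hxv : x.head = v := by
          have := hpl
          rw [hx] at this; simpa using this
        have hyv : y.tail = v := by
          have := hqh
          rw [hy] at this; simpa using this
        refine ⟨hxv.trans hyv.symm, ?_⟩
        calc x.time + x.travel ≤ t2 := (htp x (List.mem_of_mem_getLast? hx)).2
          _ ≤ y.time := (htq y (List.mem_of_mem_head? hy)).1
      · rw [List.head?_append_of_ne_nil _ hpne]; exact hph
      · rw [List.getLast?_append_of_ne_nil _ hqne]; exact hql
      · intro f hf; rcases List.mem_append.1 hf with hm | hm
        · exact ⟨(htp f hm).1, le_trans (htp f hm).2 h'.1⟩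
        · exact ⟨le_trans h.1 (htq f hm).1, (htq f hm).2⟩

end Aux


section Trip
variable {V : Type}

theorem getLast?_cons_of_ne_nil' {α : Type*} (a : α) {l : List α} (h : l ≠ []) :
    (a :: l).getLast? = l.getLast? := by
  cases l with
  | nil => simp at h
  | cons b bs => exact List.getLast?_cons_cons

theorem tripNodes_single (e : DEdge V) : tripNodes [e] = [e.tail, e.head] := by
  simp [tripNodes]

theorem tripNodes_cons (e : DEdge V) (es : List (DEdge V)) (h : es ≠ []) :
    tripNodes (e :: es) = e.tail :: tripNodes es := by
  unfold tripNodes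
  rw [getLast?_cons_of_ne_nil' e h]
  simp

theorem tripNodes_ne_nil (T : List (DEdge V)) (hT : T ≠ []) : tripNodes T ≠ [] := by
  cases T with
  | nil => simp at hT
  | cons e es => cases es with
    | nil => simp [tripNodes_single]
    | cons f fs => rw [tripNodes_cons e (f :: fs) (by simp)]; simp

theorem tripNodes_head? (e : DEdge V) (es : List (DEdge V)) :
    (tripNodes (e :: es)).head? = some e.tail := by
  cases es with
  | nil => rw [tripNodes_single]; rfl
  | cons f fs => rw [tripNodes_cons e (f :: fs) (by simp)]; rfl

theorem tripDuration_cons (e : DEdge V) (es : List (DEdge V)) :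
    tripDuration (e :: es) = e.weight + tripDuration es := by
  simp [tripDuration]

theorem tripDuration_nonneg {T : List (DEdge V)} (hw : ∀ e ∈ T, 0 ≤ e.weight) :
    0 ≤ tripDuration T := by
  induction T with
  | nil => simp [tripDuration]
  | cons e es ih =>
    rw [tripDuration_cons]
    have h1 := hw e (by simp)
    have h2 := ih (fun f hf => hw f (by simp [hf]))
    linarith

theorem rw_single_edge {G : Set (TEdge V)} (e : DEdge V) (es : List (DEdge V)) {t : ℝ}
    (hw : 0 ≤ e.weight)
    (hG : ∀ f ∈ tripTEdges (e :: es) t, f ∈ G) :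
    RW G t e.tail e.head (t + e.weight) := by
  refine ⟨by linarith, Or.inr ⟨[⟨e.tail, e.head, t, e.weight⟩],
    ⟨by simp, ?_, List.isChain_singleton _, by simp, by simp⟩, ?_⟩⟩
  · intro f hf; simp at hf; subst hf
    exact hG _ (by simp [tripTEdges])
  · intro f hf; simp at hf; subst hf; simp

theorem ride_to_last {G : Set (TEdge V)} (T : List (DEdge V))
    (hch : T.Chain' fun e f => e.head = f.tail)
    (hw : ∀ e ∈ T, 0 ≤ e.weight) (t : ℝ)
    (hG : ∀ f ∈ tripTEdges T t, f ∈ G)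
    (u : V) (hu : u ∈ tripNodes T) {z : V} (hz : (tripNodes T).getLast? = some z) :
    RW G t u z (t + tripDuration T) := by
  induction T generalizing t u with
  | nil => simp [tripNodes] at hu
  | cons e es ih =>
    cases es with
    | nil =>
      rw [tripNodes_single] at hu hz
      simp at hz
      subst hz
      simp at hu
      rcases hu with rfl | rfl
      · exact (rw_single_edge e [] (hw e (by simp)) hG).mono le_rfl
          (by rw [tripDuration_cons]; simp [tripDuration])
      · exact RW.refl _ (by have := hw e (by simp); rw [tripDuration_cons]; simp [tripDuration]; linarith)
    | cons f fs =>
      rw [tripNodes_cons e (f :: fs) (by simp)] at hu hz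
      rw [getLast?_cons_of_ne_nil' _ (tripNodes_ne_nil (f :: fs) (by simp))] at hz
      have hwe : 0 ≤ e.weight := hw e (by simp)
      have hstep : RW G t e.tail e.head (t + e.weight) := rw_single_edge e (f :: fs) hwe hG
      have hG' : ∀ g ∈ tripTEdges (f :: fs) (t + e.weight), g ∈ G := by
        intro g hg
        exact hG g (List.mem_cons_of_mem _ hg)
      have hch' : (f :: fs).Chain' fun a b => a.head = b.tail := hch.tail
      have hw' : ∀ a ∈ f :: fs, 0 ≤ a.weight := fun a ha => hw a (by simp [ha])
      have hhd : e.head = f.tail := (List.isChain_cons_cons.mp hch).1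
      have hkey : ∀ x ∈ tripNodes (f :: fs),
          RW G (t + e.weight) x z (t + tripDuration (e :: f :: fs)) := by
        intro x hx
        have := ih hch' hw' (t + e.weight) hG' x hx hz
        refine this.mono le_rfl ?_
        simp only [tripDuration_cons]; linarith
      rcases List.mem_cons.mp hu with rfl | hu
      · have hfs : e.head ∈ tripNodes (f :: fs) := by
          have := tripNodes_head? f fs
          rw [hhd]
          exact List.mem_of_mem_head? (by rw [this]; simp)
        exact hstep.trans (hkey e.head hfs)
      · exact (hkey u hu).mono (by linarith) le_rfl

theorem ride_from_first {G : Set (TEdge V)} (T : List (DEdge V))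
    (hch : T.Chain' fun e f => e.head = f.tail)
    (hw : ∀ e ∈ T, 0 ≤ e.weight) (t : ℝ)
    (hG : ∀ f ∈ tripTEdges T t, f ∈ G)
    (v : V) (hv : v ∈ tripNodes T) {z : V} (hz : (tripNodes T).head? = some z) :
    RW G t z v (t + tripDuration T) := by
  induction T generalizing t z with
  | nil => simp [tripNodes] at hv
  | cons e es ih =>
    rw [tripNodes_head? e es] at hz
    have hz' : z = e.tail := by simpa using hz.symm
    subst hz'
    have hwe : 0 ≤ e.weight := hw e (by simp)
    cases es with
    | nil =>
      rw [tripNodes_single] at hv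
      simp at hv
      rcases hv with rfl | rfl
      · exact RW.refl _ (by rw [tripDuration_cons]; simp [tripDuration]; linarith)
      · exact (rw_single_edge e [] hwe hG).mono le_rfl
          (by rw [tripDuration_cons]; simp [tripDuration])
    | cons f fs =>
      rw [tripNodes_cons e (f :: fs) (by simp)] at hv
      have hG' : ∀ g ∈ tripTEdges (f :: fs) (t + e.weight), g ∈ G := by
        intro g hg
        exact hG g (List.mem_cons_of_mem _ hg)
      have hdnn : 0 ≤ tripDuration (e :: f :: fs) := tripDuration_nonneg hw
      rcases List.mem_cons.mp hv with rfl | hv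
      · exact RW.refl _ (by linarith)
      · have hhd : e.head = f.tail := (List.isChain_cons_cons.mp hch).1
        have hstep : RW G t e.tail e.head (t + e.weight) := rw_single_edge e (f :: fs) hwe hG
        have hnext := ih hch.tail (fun a ha => hw a (by simp [ha])) (t + e.weight) hG' hv
          (tripNodes_head? f fs)
        rw [hhd] at hstep
        refine (hstep.trans hnext).mono le_rfl ?_
        simp only [tripDuration_cons]; linarith

theorem tripNodes_getLast?_head {T : List (DEdge V)} {Tb : List (DEdge V)}
    (hrev : tripNodes Tb = (tripNodes T).reverse) :
    (tripNodes Tb).head? = (tripNodes T).getLast? := by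
  rw [hrev, List.head?_reverse]

/-- Riding a pair `(T, T̄)` scheduled back-to-back: any node of `T` reaches any
node of `T` within the time window of the pair. -/
theorem pair_ride {G : Set (TEdge V)} (T Tb : List (DEdge V)) (hT : T ≠ [])
    (hch : T.Chain' fun e f => e.head = f.tail)
    (hchb : Tb.Chain' fun e f => e.head = f.tail)
    (hw : ∀ e ∈ T, 0 ≤ e.weight) (hwb : ∀ e ∈ Tb, 0 ≤ e.weight)
    (hrev : tripNodes Tb = (tripNodes T).reverse) (t : ℝ)
    (hG1 : ∀ f ∈ tripTEdges T t, f ∈ G)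
    (hG2 : ∀ f ∈ tripTEdges Tb (t + tripDuration T), f ∈ G)
    (u v : V) (hu : u ∈ tripNodes T) (hv : v ∈ tripNodes T) :
    RW G t u v (t + tripDuration T + tripDuration Tb) := by
  obtain ⟨z, hz⟩ := Option.isSome_iff_exists.mp
    (List.getLast?_isSome.mpr (tripNodes_ne_nil T hT))
  have h1 := ride_to_last T hch hw t hG1 u hu hz
  have hb : (tripNodes Tb).head? = some z := by
    rw [tripNodes_getLast?_head hrev, hz]
  have hvb : v ∈ tripNodes Tb := by rw [hrev]; exact List.mem_reverse.mpr hv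
  have h2 := ride_from_first Tb hchb hwb (t + tripDuration T) hG2 v hvb hb
  exact h1.trans h2

theorem mem_tripNodes_of_tail {T : List (DEdge V)} {e : DEdge V} (he : e ∈ T) :
    e.tail ∈ tripNodes T := by
  unfold tripNodes
  exact List.mem_append_left _ (List.mem_map_of_mem he)

theorem mem_tripNodes_of_head {T : List (DEdge V)} {e : DEdge V}
    (hch : T.Chain' fun a b => a.head = b.tail) (he : e ∈ T) :
    e.head ∈ tripNodes T := by
  induction T with
  | nil => simp at he
  | cons f fs ih =>
    cases fs with
    | nil =>
      simp at he; subst he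
      rw [tripNodes_single]; simp
    | cons g gs =>
      rw [tripNodes_cons f (g :: gs) (by simp)]
      rcases List.mem_cons.mp he with rfl | he'
      · have : e.head = g.tail := (List.isChain_cons_cons.mp hch).1
        rw [this]
        exact List.mem_cons_of_mem _ (mem_tripNodes_of_tail (by simp))
      · exact List.mem_cons_of_mem _ (ih hch.tail he')

theorem tedge_corresponds {T : List (DEdge V)} {t : ℝ} {f : TEdge V}
    (hf : f ∈ tripTEdges T t) : ∃ e ∈ T, f.tail = e.tail ∧ f.head = e.head := by
  induction T generalizing t with
  | nil => simp [tripTEdges] at hf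
  | cons e es ih =>
    rcases List.mem_cons.mp hf with rfl | hf'
    · exact ⟨e, by simp⟩
    · obtain ⟨e', he', h1, h2⟩ := ih hf'
      exact ⟨e', List.mem_cons_of_mem _ he', h1, h2⟩

theorem tedge_nodes {T : List (DEdge V)} {t : ℝ} {f : TEdge V}
    (hch : T.Chain' fun a b => a.head = b.tail)
    (hf : f ∈ tripTEdges T t) : f.tail ∈ tripNodes T ∧ f.head ∈ tripNodes T := by
  obtain ⟨e, he, h1, h2⟩ := tedge_corresponds hf
  rw [h1, h2]
  exact ⟨mem_tripNodes_of_tail he, mem_tripNodes_of_head hch he⟩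

end Trip

section Comb
variable {ι W : Type}

/-- Union (as list) of node lists. -/
def UU (N : ι → List W) (l : List ι) : List W := l.flatMap N

theorem mem_UU {N : ι → List W} {l : List ι} {x : W} :
    x ∈ UU N l ↔ ∃ i ∈ l, x ∈ N i := by simp [UU]

/-- Tower: each element's node list meets the union of the later ones or the base. -/
def TowerB (N : ι → List W) (base : List W) : List ι → Prop
  | [] => True
  | i :: t => (∃ x, x ∈ N i ∧ (x ∈ UU N t ∨ x ∈ base)) ∧ TowerB N base t

theorem towerB_nil {N : ι → List W} {base : List W} : TowerB N base [] := trivial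

theorem towerB_cons {N : ι → List W} {base : List W} {i : ι} {t : List ι} :
    TowerB N base (i :: t) ↔
      (∃ x, x ∈ N i ∧ (x ∈ UU N t ∨ x ∈ base)) ∧ TowerB N base t := Iff.rfl

theorem towerB_congr {N N' : ι → List W} {base : List W} {t : List ι}
    (h : ∀ x ∈ t, N' x = N x) (ht : TowerB N' base t) : TowerB N base t := by
  induction t with
  | nil => trivial
  | cons i t ih =>
    obtain ⟨⟨x, hx1, hx2⟩, ht2⟩ := ht
    refine ⟨⟨x, by rw [← h i (by simp)]; exact hx1, ?_⟩, ih (fun y hy => h y (by simp [hy])) ht2⟩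
    rcases hx2 with hx2 | hx2
    · left
      rw [mem_UU] at hx2 ⊢
      obtain ⟨j, hj, hxj⟩ := hx2
      exact ⟨j, hj, by rw [← h j (by simp [hj])]; exact hxj⟩
    · exact Or.inr hx2

theorem towerB_snoc {N : ι → List W} {b : List W} {i : ι} {t : List ι}
    (ht : TowerB N (b ++ N i) t) (hi : ∃ x, x ∈ N i ∧ x ∈ b) :
    TowerB N b (t ++ [i]) := by
  induction t with
  | nil =>
    obtain ⟨x, hx1, hx2⟩ := hi
    exact ⟨⟨x, hx1, Or.inr hx2⟩, trivial⟩
  | cons j t ih =>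
    obtain ⟨⟨x, hx1, hx2⟩, ht2⟩ := ht
    refine ⟨⟨x, hx1, ?_⟩, ih ht2⟩
    rcases hx2 with hx2 | hx2
    · left; rw [mem_UU] at hx2 ⊢
      obtain ⟨k, hk, hxk⟩ := hx2
      exact ⟨k, by simp [hk], hxk⟩
    · rcases List.mem_append.mp hx2 with hx2 | hx2
      · exact Or.inr hx2
      · exact Or.inl (mem_UU.mpr ⟨i, by simp, hx2⟩)

/-- Two indices touch if their node lists intersect. -/
def touchN (N : ι → List W) (a b : ι) : Prop := ∃ x, x ∈ N a ∧ x ∈ N b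

theorem touchN_symm {N : ι → List W} {a b : ι} (h : touchN N a b) : touchN N b a := by
  obtain ⟨x, h1, h2⟩ := h; exact ⟨x, h2, h1⟩

def lrel (N : ι → List W) (l : List ι) (a b : ι) : Prop := a ∈ l ∧ b ∈ l ∧ touchN N a b

theorem lrel_symm {N : ι → List W} {l : List ι} : Symmetric (lrel N l) := by
  intro a b ⟨h1, h2, h3⟩; exact ⟨h2, h1, touchN_symm h3⟩

/-- From a tower rooted at `r`, the whole family is connected to `r`. -/
theorem conn_of_towerB {N : ι → List W} {r : ι} {t : List ι} (ht : TowerB N (N r) t) :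
    ∀ x ∈ r :: t, Relation.ReflTransGen (lrel N (r :: t)) r x := by
  induction t with
  | nil =>
    intro x hx; simp at hx; subst hx; exact Relation.ReflTransGen.refl
  | cons i t ih =>
    obtain ⟨⟨x, hx1, hx2⟩, ht2⟩ := ht
    have hmono : ∀ a b, lrel N (r :: t) a b → lrel N (r :: i :: t) a b := by
      intro a b ⟨h1, h2, h3⟩
      refine ⟨?_, ?_, h3⟩ <;> simp at h1 h2 ⊢ <;> tauto
    have ihm : ∀ y ∈ r :: t, Relation.ReflTransGen (lrel N (r :: i :: t)) r y := by
      intro y hy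
      exact Relation.ReflTransGen.mono hmono _ _ (ih ht2 y hy)
    intro y hy
    rcases List.mem_cons.mp hy with rfl | hy'
    · exact Relation.ReflTransGen.refl
    rcases List.mem_cons.mp hy' with rfl | hy'
    · -- y = i : connect via x
      rcases hx2 with hx2 | hx2
      · obtain ⟨j, hj, hxj⟩ := mem_UU.mp hx2
        have hrj := ihm j (by simp [hj])
        refine hrj.tail ⟨by simp [hj], by simp, ⟨x, hxj, hx1⟩⟩
      · exact Relation.ReflTransGen.single ⟨by simp, by simp, ⟨x, hx2, hx1⟩⟩
    · exact ihm y (by simp [hy'])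

theorem neighbor_exists {N : ι → List W} {l : List ι} {r x : ι}
    (h : Relation.ReflTransGen (lrel N l) r x) :
    x = r ∨ ∃ i, i ∈ l ∧ i ≠ r ∧ touchN N r i := by
  induction h with
  | refl => exact Or.inl rfl
  | tail hab hbc ih =>
    rename_i b c
    by_cases hc : c = r
    · exact Or.inl hc
    rcases ih with rfl | ih
    · exact Or.inr ⟨c, hbc.2.1, hc, hbc.2.2⟩
    · exact Or.inr ih

/-- A connected family can be tower-ordered from any root. -/
theorem tower_of_conn_aux [DecidableEq ι] :
    ∀ (n : ℕ) (N : ι → List W) (l : List ι), l.length = n → l.Nodup → ∀ r ∈ l,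
      (∀ x ∈ l, Relation.ReflTransGen (lrel N l) r x) →
      ∃ t, (r :: t).Perm l ∧ TowerB N (N r) t := by
  intro n
  induction n using Nat.strong_induction_on with
  | _ n ih =>
  intro N l hn hnd r hr hconn
  by_cases hone : ∀ x ∈ l, x = r
  · refine ⟨[], ?_, trivial⟩
    have : l = [r] := by
      cases l with
      | nil => simp at hr
      | cons a l' =>
        have ha := hone a (by simp)
        subst ha
        cases l' with
        | nil => rfl
        | cons b l'' =>
          have hb := hone b (by simp)
          subst hb
          simp at hnd
    rw [this]
  · push_neg at hone
    obtain ⟨x0, hx0, hx0r⟩ := hone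
    obtain ⟨i, hi, hir, htouch⟩ := (neighbor_exists (hconn x0 hx0)).resolve_left hx0r
    classical
    set N' := Function.update N r (N r ++ N i) with hN'
    set l' := l.erase i with hl'
    have hrl' : r ∈ l' := (List.Nodup.mem_erase_iff hnd).mpr ⟨(Ne.symm hir), hr⟩
    have hmem_l' : ∀ x, x ∈ l' ↔ x ≠ i ∧ x ∈ l := fun x => List.Nodup.mem_erase_iff hnd
    have hsub : ∀ y, ∀ z ∈ N y, z ∈ N' y := by
      intro y z hz
      by_cases hy : y = r
      · subst hy; rw [hN', Function.update_self]; exact List.mem_append_left _ hz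
      · rw [hN', Function.update_of_ne hy]; exact hz
    have hNr : N' r = N r ++ N i := by rw [hN']; exact Function.update_self _ _ _
    have hstep : ∀ a b, lrel N l a b →
        Relation.ReflTransGen (lrel N' l') (if a = i then r else a) (if b = i then r else b) := by
      intro a b hab
      obtain ⟨ha, hb, x, hxa, hxb⟩ := hab
      by_cases hai : a = i
      · by_cases hbi : b = i
        · rw [if_pos hai, if_pos hbi]
        · rw [if_pos hai, if_neg hbi]
          refine Relation.ReflTransGen.single ⟨hrl', (hmem_l' b).mpr ⟨hbi, hb⟩, ⟨x, ?_, hsub b x hxb⟩⟩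
          rw [hNr]; exact List.mem_append_right _ (hai ▸ hxa)
      · by_cases hbi : b = i
        · rw [if_neg hai, if_pos hbi]
          refine Relation.ReflTransGen.single ⟨(hmem_l' a).mpr ⟨hai, ha⟩, hrl', ⟨x, hsub a x hxa, ?_⟩⟩
          rw [hNr]; exact List.mem_append_right _ (hbi ▸ hxb)
        · rw [if_neg hai, if_neg hbi]
          exact Relation.ReflTransGen.single
            ⟨(hmem_l' a).mpr ⟨hai, ha⟩, (hmem_l' b).mpr ⟨hbi, hb⟩, ⟨x, hsub a x hxa, hsub b x hxb⟩⟩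
    have hconn' : ∀ x ∈ l', Relation.ReflTransGen (lrel N' l') r x := by
      intro x hx
      have h0 : Relation.ReflTransGen (lrel N l) r x := hconn x ((hmem_l' x).mp hx).2
      have : Relation.ReflTransGen (lrel N' l') (if r = i then r else r) (if x = i then r else x) := by
        clear hx
        induction h0 with
        | refl => exact Relation.ReflTransGen.refl
        | tail hab hbc ih2 => exact ih2.trans (hstep _ _ hbc)
      simpa [if_neg (Ne.symm hir), if_neg ((hmem_l' x).mp hx).1] using this
    have hlen : l'.length < n := by
      rw [hl', ← hn, List.length_erase_of_mem hi]
      have : 0 < l.length := List.length_pos_of_mem hi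
      omega
    obtain ⟨t', hperm', htow'⟩ := ih l'.length hlen N' l' rfl (hnd.erase i) r hrl' hconn'
    refine ⟨t' ++ [i], ?_, ?_⟩
    · have h1 : List.Perm ((r :: t') ++ [i]) (l' ++ [i]) := hperm'.append_right [i]
      have h2 : List.Perm (l' ++ [i]) (i :: l') := List.perm_append_singleton i l'
      have h3 : List.Perm (i :: l') l := (List.perm_cons_erase hi).symm
      simpa using (h1.trans h2).trans h3
    · have hrt' : r ∉ t' := by
        have := hperm'.nodup_iff.mpr (hnd.erase i)
        simp at this; exact this.1
      have htow2 : TowerB N (N r ++ N i) t' := by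
        refine towerB_congr (N' := N') (fun y hy => ?_) ?_
        · rw [hN']
          exact Function.update_of_ne (fun hyr : y = r => hrt' (hyr ▸ hy)) _ _
        · rw [← hNr]; exact htow'
      exact towerB_snoc htow2 (touchN_symm htouch)

theorem tower_of_conn [DecidableEq ι] (N : ι → List W) (l : List ι) (hnd : l.Nodup)
    (r : ι) (hr : r ∈ l) (hconn : ∀ x ∈ l, Relation.ReflTransGen (lrel N l) r x) :
    ∃ t, (r :: t).Perm l ∧ TowerB N (N r) t :=
  tower_of_conn_aux l.length N l rfl hnd r hr hconn

end Comb

section Split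
variable {ι W : Type}

theorem list_sum_nonneg {l : List ℝ} (h : ∀ x ∈ l, 0 ≤ x) : 0 ≤ l.sum := by
  induction l with
  | nil => simp
  | cons a l ih =>
    simp only [List.sum_cons]
    have h1 := h a (by simp)
    have h2 := ih (fun x hx => h x (by simp [hx]))
    linarith

theorem map_update_not_mem [DecidableEq ι] {w : ι → ℝ} {P : ι} {v : ℝ} {l : List ι}
    (h : P ∉ l) : l.map (Function.update w P v) = l.map w :=
  List.map_congr_left fun y hy => Function.update_of_ne (fun e : y = P => h (e ▸ hy)) _ _

theorem sum_map_update_mem [DecidableEq ι] {w : ι → ℝ} {P : ι} {v : ℝ} :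
    ∀ {l : List ι}, l.Nodup → P ∈ l →
      (l.map (Function.update w P v)).sum = (l.map w).sum - w P + v := by
  intro l
  induction l with
  | nil => intro _ h; simp at h
  | cons a l ih =>
    intro hnd hP
    rcases List.mem_cons.mp hP with rfl | hP'
    · have hnotin : P ∉ l := (List.nodup_cons.mp hnd).1
      simp only [List.map_cons, List.sum_cons, Function.update_self, map_update_not_mem hnotin]
      ring
    · have hne : a ≠ P := fun e => (List.nodup_cons.mp hnd).1 (e ▸ hP')
      simp only [List.map_cons, List.sum_cons, Function.update_of_ne hne,
        ih (List.nodup_cons.mp hnd).2 hP']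
      ring

/-- The key splitting lemma: a connected (tower-ordered) weighted family can be
split into a hub `h` and two tower-connected parts `A`, `B`, each of weight
(including the hub) at least a third of the total. -/
theorem split_lemma [DecidableEq ι] (N : ι → List W) :
    ∀ (t : List ι) (r : ι) (w : ι → ℝ), (∀ i, 0 ≤ w i) → (r :: t).Nodup →
      TowerB N (N r) t →
      ∃ h A B, (h :: (A ++ B)).Perm (r :: t) ∧ TowerB N (N h) A ∧ TowerB N (N h) B ∧
        ((r :: t).map w).sum / 3 ≤ (A.map w).sum + w h ∧
        ((r :: t).map w).sum / 3 ≤ (B.map w).sum + w h := by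
  intro t
  induction t with
  | nil =>
    intro r w hw _ _
    refine ⟨r, [], [], List.Perm.refl _, towerB_nil, towerB_nil, ?_, ?_⟩ <;>
      simp <;> linarith [hw r]
  | cons Q t' iht =>
    intro r w hw hnd htow
    obtain ⟨⟨x, hxQ, hxU⟩, htow'⟩ := htow
    have hWnn : 0 ≤ ((r :: Q :: t').map w).sum :=
      list_sum_nonneg (by
        intro y hy
        obtain ⟨i, _, rfl⟩ := List.mem_map.mp hy
        exact hw i)
    by_cases hQbig : ((r :: Q :: t').map w).sum / 3 ≤ w Q
    · -- `Q` itself is heavy: make it the hub.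
      have hconn : ∀ y ∈ r :: Q :: t',
          Relation.ReflTransGen (lrel N (r :: Q :: t')) r y :=
        conn_of_towerB ⟨⟨x, hxQ, hxU⟩, htow'⟩
      have hsymm : Symmetric (Relation.ReflTransGen (lrel N (r :: Q :: t'))) :=
        by
          haveI : Std.Symm (lrel N (r :: Q :: t')) := ⟨fun _ _ hh => lrel_symm hh⟩
          exact fun a b hab => (Relation.ReflTransGen.symmetric (r := lrel N (r :: Q :: t'))).symm a b hab
      have hconnQ : ∀ y ∈ r :: Q :: t',
          Relation.ReflTransGen (lrel N (r :: Q :: t')) Q y := by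
        intro y hy
        exact (hsymm (hconn Q (by simp))).trans (hconn y hy)
      obtain ⟨A, hpermA, htowA⟩ := tower_of_conn N (r :: Q :: t') hnd Q (by simp) hconnQ
      have hsumA : ((Q :: A).map w).sum = ((r :: Q :: t').map w).sum :=
        (hpermA.map w).sum_eq
      refine ⟨Q, A, [], by simpa using hpermA, htowA, towerB_nil, ?_, ?_⟩
      · simp only [List.map_cons, List.sum_cons] at hsumA hWnn ⊢
        linarith
      · simpa using hQbig
    · push_neg at hQbig
      obtain ⟨P₀, hP₀mem, hxP₀⟩ : ∃ P₀, P₀ ∈ r :: t' ∧ x ∈ N P₀ := by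
        rcases hxU with hU | hb
        · obtain ⟨j, hj, hxj⟩ := mem_UU.mp hU
          exact ⟨j, by simp [hj], hxj⟩
        · exact ⟨r, by simp, hb⟩
      have hnd' : (r :: t').Nodup := by
        have hsub : (r :: t').Sublist (r :: Q :: t') :=
          List.Sublist.cons₂ r (List.sublist_cons_self Q t')
        exact hsub.nodup hnd
      set w' := Function.update w P₀ (w P₀ + w Q) with hw'def
      have hw' : ∀ i, 0 ≤ w' i := by
        intro i
        by_cases hiP : i = P₀
        · subst hiP; rw [hw'def, Function.update_self]; linarith [hw i, hw Q]
        · rw [hw'def, Function.update_of_ne hiP]; exact hw i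
      obtain ⟨h, A', B', hperm, htA, htB, hsA, hsB⟩ := iht r w' hw' hnd' htow'
      -- total weight is preserved
      have hWeq : ((r :: t').map w').sum = ((r :: Q :: t').map w).sum := by
        rw [hw'def, sum_map_update_mem hnd' hP₀mem]
        simp only [List.map_cons, List.sum_cons]
        ring
      have hndh : (h :: (A' ++ B')).Nodup := hperm.nodup_iff.mpr hnd'
      have hhA : h ∉ A' ++ B' := (List.nodup_cons.mp hndh).1
      have hndAB : (A' ++ B').Nodup := (List.nodup_cons.mp hndh).2
      have hndA : A'.Nodup := (List.nodup_append.mp hndAB).1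
      have hndB : B'.Nodup := (List.nodup_append.mp hndAB).2.1
      have hP₀h : P₀ ∈ h :: (A' ++ B') := hperm.mem_iff.mpr hP₀mem
      -- a perm juggling helper
      have permQ : ∀ (X Y : List ι), (h :: (X ++ Y)).Perm (r :: t') →
          (h :: ((Q :: X) ++ Y)).Perm (r :: Q :: t') := by
        intro X Y hp
        exact (List.Perm.swap Q h (X ++ Y)).trans ((hp.cons Q).trans (List.Perm.swap r Q t'))
      have permQB : ∀ (X Y : List ι), (h :: (X ++ Y)).Perm (r :: t') →
          (h :: (X ++ (Q :: Y))).Perm (r :: Q :: t') := by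
        intro X Y hp
        exact (List.perm_middle.cons h).trans
          ((List.Perm.swap Q h (X ++ Y)).trans ((hp.cons Q).trans (List.Perm.swap r Q t')))
      rcases List.mem_cons.mp hP₀h with hP₀eq | hP₀AB
      · -- the hub got the extra weight: attach Q to whichever side is lighter
        subst hP₀eq
        have hwh : w' P₀ = w P₀ + w Q := by rw [hw'def, Function.update_self]
        have hA'w : (A'.map w').sum = (A'.map w).sum := by
          rw [hw'def, map_update_not_mem (fun hc => hhA (List.mem_append_left _ hc))]
        have hB'w : (B'.map w').sum = (B'.map w).sum := by
          rw [hw'def, map_update_not_mem (fun hc => hhA (List.mem_append_right _ hc))]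
        have htot : (A'.map w').sum + (B'.map w').sum + w' P₀
            = ((r :: Q :: t').map w).sum := by
          rw [← hWeq, ← (hperm.map w').sum_eq]
          simp only [List.map_cons, List.sum_cons, List.map_append, List.sum_append]
          ring
        rw [hWeq, hwh, hA'w] at hsA
        rw [hWeq, hwh, hB'w] at hsB
        rw [hwh, hA'w, hB'w] at htot
        rcases le_total ((A'.map w).sum) ((B'.map w).sum) with hAB | hAB
        · refine ⟨P₀, Q :: A', B', permQ A' B' hperm,
            ⟨⟨x, hxQ, Or.inr hxP₀⟩, htA⟩, htB, ?_, ?_⟩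
          · simp only [List.map_cons, List.sum_cons] at hsA htot hWnn hQbig ⊢
            linarith [hw P₀]
          · simp only [List.map_cons, List.sum_cons] at hsA htot hWnn hQbig ⊢
            linarith [hw P₀]
        · refine ⟨P₀, A', Q :: B', permQB A' B' hperm,
            htA, ⟨⟨x, hxQ, Or.inr hxP₀⟩, htB⟩, ?_, ?_⟩
          · simp only [List.map_cons, List.sum_cons] at hsB htot hWnn hQbig ⊢
            linarith [hw P₀]
          · simp only [List.map_cons, List.sum_cons] at hsB htot hWnn hQbig ⊢
            linarith [hw P₀]
      · -- the attachment is inside A' or B'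
        have hhP₀ : h ≠ P₀ := fun e => hhA (e ▸ hP₀AB)
        have hwh : w' h = w h := by
          rw [hw'def, Function.update_of_ne hhP₀]
        rcases List.mem_append.mp hP₀AB with hP₀A | hP₀B
        · have hP₀B' : P₀ ∉ B' := fun hc =>
            (List.disjoint_of_nodup_append hndAB) hP₀A hc
          have hA'w : (A'.map w').sum = (A'.map w).sum - w P₀ + (w P₀ + w Q) := by
            rw [hw'def]; exact sum_map_update_mem hndA hP₀A
          have hB'w : (B'.map w').sum = (B'.map w).sum := by
            rw [hw'def, map_update_not_mem hP₀B']
          rw [hWeq, hwh, hA'w] at hsA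
          rw [hWeq, hwh, hB'w] at hsB
          refine ⟨h, Q :: A', B', permQ A' B' hperm,
            ⟨⟨x, hxQ, Or.inl (mem_UU.mpr ⟨P₀, hP₀A, hxP₀⟩)⟩, htA⟩, htB, ?_, ?_⟩
          · simp only [List.map_cons, List.sum_cons] at hsA ⊢
            linarith
          · exact hsB
        · have hP₀A' : P₀ ∉ A' := fun hc =>
            (List.disjoint_of_nodup_append hndAB) hc hP₀B
          have hB'w : (B'.map w').sum = (B'.map w).sum - w P₀ + (w P₀ + w Q) := by
            rw [hw'def]; exact sum_map_update_mem hndB hP₀B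
          have hA'w : (A'.map w').sum = (A'.map w).sum := by
            rw [hw'def, map_update_not_mem hP₀A']
          rw [hWeq, hwh, hA'w] at hsA
          rw [hWeq, hwh, hB'w] at hsB
          refine ⟨h, A', Q :: B', permQB A' B' hperm, htA,
            ⟨⟨x, hxQ, Or.inl (mem_UU.mpr ⟨P₀, hP₀B, hxP₀⟩)⟩, htB⟩, ?_, ?_⟩
          · exact hsA
          · simp only [List.map_cons, List.sum_cons] at hsB ⊢
            linarith

end Split

section Sched
variable {V : Type} {ι : Type}

def TowerR (N : ι → List V) : List V → List ι → Prop
  | _, [] => True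
  | base, i :: s => (∃ x, x ∈ N i ∧ x ∈ base) ∧ TowerR N (base ++ N i) s

theorem towerR_snoc {N : ι → List V} :
    ∀ {M : List ι} {base : List V} {i : ι}, TowerR N base M →
      (∃ x, x ∈ N i ∧ (x ∈ base ∨ x ∈ UU N M)) → TowerR N base (M ++ [i]) := by
  intro M
  induction M with
  | nil =>
    intro base i _ hx
    obtain ⟨x, hx1, hx2⟩ := hx
    rcases hx2 with hx2 | hx2
    · exact ⟨⟨x, hx1, hx2⟩, trivial⟩
    · simp [UU] at hx2
  | cons j M' ih =>
    intro base i ht hx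
    obtain ⟨hj, ht'⟩ := ht
    refine ⟨hj, ih ht' ?_⟩
    obtain ⟨x, hx1, hx2⟩ := hx
    refine ⟨x, hx1, ?_⟩
    rcases hx2 with hx2 | hx2
    · exact Or.inl (List.mem_append_left _ hx2)
    · rcases mem_UU.mp hx2 with ⟨k, hk, hxk⟩
      rcases List.mem_cons.mp hk with rfl | hk'
      · exact Or.inl (List.mem_append_right _ hxk)
      · exact Or.inr (mem_UU.mpr ⟨k, hk', hxk⟩)

theorem towerR_of_towerB {N : ι → List V} {base : List V} :
    ∀ {L : List ι}, TowerB N base L → TowerR N base L.reverse := by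
  intro L
  induction L with
  | nil => intro _; trivial
  | cons i t ih =>
    intro ht
    obtain ⟨⟨x, hx1, hx2⟩, ht'⟩ := ht
    simp only [List.reverse_cons]
    refine towerR_snoc (ih ht') ⟨x, hx1, ?_⟩
    rcases hx2 with hx2 | hx2
    · obtain ⟨j, hj, hxj⟩ := mem_UU.mp hx2
      exact Or.inr (mem_UU.mpr ⟨j, by simpa using hj, hxj⟩)
    · exact Or.inl hx2

/-- A good trip pair. -/
def GoodPair (p : List (DEdge V) × List (DEdge V)) : Prop :=
  p.1 ≠ [] ∧ (p.1.Chain' fun e f => e.head = f.tail) ∧ (p.2.Chain' fun e f => e.head = f.tail) ∧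
  (∀ e ∈ p.1, 0 ≤ e.weight) ∧ (∀ e ∈ p.2, 0 ≤ e.weight) ∧
  tripNodes p.2 = (tripNodes p.1).reverse

def pairDur (p : List (DEdge V) × List (DEdge V)) : ℝ :=
  tripDuration p.1 + tripDuration p.2

theorem pairDur_nonneg {p : List (DEdge V) × List (DEdge V)} (hp : GoodPair p) :
    0 ≤ pairDur p := by
  obtain ⟨-, -, -, h1, h2, -⟩ := hp
  have := tripDuration_nonneg h1
  have := tripDuration_nonneg h2
  unfold pairDur; linarith

def SchedAt (G : Set (TEdge V)) (T : List (DEdge V)) (t : ℝ) : Prop :=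
  ∀ f ∈ tripTEdges T t, f ∈ G

def PairsSched (G : Set (TEdge V)) : List (List (DEdge V) × List (DEdge V)) → ℝ → Prop
  | [], _ => True
  | p :: L, t => SchedAt G p.1 t ∧ SchedAt G p.2 (t + tripDuration p.1) ∧
      PairsSched G L (t + pairDur p)

theorem pairsSched_time_congr {G : Set (TEdge V)}
    {L : List (List (DEdge V) × List (DEdge V))} {t t' : ℝ} (h : t = t')
    (hs : PairsSched G L t) : PairsSched G L t' := h ▸ hs

theorem pair_ride' {G : Set (TEdge V)} {p : List (DEdge V) × List (DEdge V)}
    (hp : GoodPair p) {t : ℝ} (h1 : SchedAt G p.1 t) (h2 : SchedAt G p.2 (t + tripDuration p.1))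
    {u v : V} (hu : u ∈ tripNodes p.1) (hv : v ∈ tripNodes p.1) :
    RW G t u v (t + pairDur p) := by
  obtain ⟨hne, hc1, hc2, hw1, hw2, hrev⟩ := hp
  have := pair_ride p.1 p.2 hne hc1 hc2 hw1 hw2 hrev t h1 h2 u v hu hv
  refine this.mono le_rfl ?_
  unfold pairDur; linarith

def pairsDur (L : List (List (DEdge V) × List (DEdge V))) : ℝ := (L.map pairDur).sum

theorem pairsDur_nonneg {L : List (List (DEdge V) × List (DEdge V))}
    (h : ∀ p ∈ L, GoodPair p) : 0 ≤ pairsDur L :=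
  list_sum_nonneg (by
    intro y hy
    obtain ⟨p, hp, rfl⟩ := List.mem_map.mp hy
    exact pairDur_nonneg (h p hp))

variable (pairAt : ι → List (DEdge V) × List (DEdge V))

/-- Node list of an index. -/
def NI (pairAt : ι → List (DEdge V) × List (DEdge V)) (i : ι) : List V := tripNodes (pairAt i).1

/-- Gather lemma: along a `TowerB` ordering, every node of the union reaches
some node of the base within the scheduling window. -/
theorem gather_lemma {G : Set (TEdge V)} :
    ∀ (L : List ι) (t : ℝ) (base : List V),
      PairsSched G (L.map pairAt) t → TowerB (NI pairAt) base L →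
      (∀ i ∈ L, GoodPair (pairAt i)) →
      ∀ u ∈ UU (NI pairAt) L, ∃ h ∈ base, RW G t u h (t + pairsDur (L.map pairAt)) := by
  intro L
  induction L with
  | nil => intro t base _ _ _ u hu; simp [UU] at hu
  | cons i L' ih =>
    intro t base hsched htow hgood u hu
    obtain ⟨hs1, hs2, hsrest⟩ := hsched
    obtain ⟨⟨x, hxi, hxrest⟩, htow'⟩ := htow
    have hgoodi := hgood i (by simp)
    have hgood' : ∀ j ∈ L', GoodPair (pairAt j) := fun j hj => hgood j (by simp [hj])
    have hDnn : 0 ≤ pairsDur (L'.map pairAt) := pairsDur_nonneg (by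
      intro q hq; obtain ⟨j, hj, rfl⟩ := List.mem_map.mp hq; exact hgood' j hj)
    have hdnn : 0 ≤ pairDur (pairAt i) := pairDur_nonneg hgoodi
    have htotal : pairsDur ((i :: L').map pairAt)
        = pairDur (pairAt i) + pairsDur (L'.map pairAt) := by
      simp [pairsDur]
    rcases mem_UU.mp hu with ⟨j, hj, huj⟩
    rcases List.mem_cons.mp hj with rfl | hj'
    · -- u is on the first pair: ride it to the attachment point x
      have hride : RW G t u x (t + pairDur (pairAt j)) := pair_ride' hgoodi hs1 hs2 huj hxi
      rcases hxrest with hxU | hxb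
      · -- x is in a later pair: recurse
        obtain ⟨h, hhb, hrw⟩ := ih (t + pairDur (pairAt j)) base hsrest htow' hgood' x hxU
        exact ⟨h, hhb, (hride.trans hrw).mono le_rfl (by rw [htotal]; linarith)⟩
      · exact ⟨x, hxb, hride.mono le_rfl (by rw [htotal]; linarith)⟩
    · -- u is in a later pair
      obtain ⟨h, hhb, hrw⟩ := ih (t + pairDur (pairAt i)) base hsrest htow' hgood' u
        (mem_UU.mpr ⟨j, hj', huj⟩)
      exact ⟨h, hhb, hrw.mono (by linarith) (by rw [htotal]; linarith)⟩

/-- Spread lemma: along a `TowerR` ordering, every node of the union is reached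
from some node of the base within the scheduling window. -/
theorem spread_lemma {G : Set (TEdge V)} :
    ∀ (L : List ι) (t : ℝ) (base : List V),
      PairsSched G (L.map pairAt) t → TowerR (NI pairAt) base L →
      (∀ i ∈ L, GoodPair (pairAt i)) →
      ∀ v ∈ UU (NI pairAt) L, ∃ h ∈ base, RW G t h v (t + pairsDur (L.map pairAt)) := by
  intro L
  induction L with
  | nil => intro t base _ _ _ v hv; simp [UU] at hv
  | cons i L' ih =>
    intro t base hsched htow hgood v hv
    obtain ⟨hs1, hs2, hsrest⟩ := hsched
    obtain ⟨⟨x, hxi, hxb⟩, htow'⟩ := htow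
    have hgoodi := hgood i (by simp)
    have hgood' : ∀ j ∈ L', GoodPair (pairAt j) := fun j hj => hgood j (by simp [hj])
    have hDnn : 0 ≤ pairsDur (L'.map pairAt) := pairsDur_nonneg (by
      intro q hq; obtain ⟨j, hj, rfl⟩ := List.mem_map.mp hq; exact hgood' j hj)
    have hdnn : 0 ≤ pairDur (pairAt i) := pairDur_nonneg hgoodi
    have htotal : pairsDur ((i :: L').map pairAt)
        = pairDur (pairAt i) + pairsDur (L'.map pairAt) := by
      simp [pairsDur]
    rcases mem_UU.mp hv with ⟨j, hj, hvj⟩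
    rcases List.mem_cons.mp hj with rfl | hj'
    · -- v is on the first pair: enter at x and ride
      have hride : RW G t x v (t + pairDur (pairAt j)) := pair_ride' hgoodi hs1 hs2 hxi hvj
      exact ⟨x, hxb, hride.mono le_rfl (by rw [htotal]; linarith)⟩
    · -- v is in a later pair
      obtain ⟨h, hhb, hrw⟩ := ih (t + pairDur (pairAt i)) (base ++ NI pairAt i) hsrest htow'
        hgood' v (mem_UU.mpr ⟨j, hj', hvj⟩)
      rcases List.mem_append.mp hhb with hhb | hhb
      · exact ⟨h, hhb, ((RW.refl h (by linarith)).trans hrw).mono le_rfl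
          (by rw [htotal]; linarith)⟩
      · have hride : RW G t x h (t + pairDur (pairAt i)) := pair_ride' hgoodi hs1 hs2 hxi hhb
        exact ⟨x, hxb, (hride.trans hrw).mono le_rfl (by rw [htotal]; linarith)⟩

end Sched

section SchedGlue
variable {V : Type}

theorem scheduleTimes_prefix (Pre X : List (List (DEdge V))) :
    scheduleTimes (Pre ++ X) Pre.length = (Pre.map tripDuration).sum := by
  unfold scheduleTimes
  rw [List.take_left]

theorem sched_here (Pre : List (List (DEdge V))) (a : List (DEdge V))
    (rest : List (List (DEdge V))) :
    SchedAt (scheduleTG (Pre ++ a :: rest)) a ((Pre.map tripDuration).sum) := by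
  intro f hf
  have hlen : Pre.length < (Pre ++ a :: rest).length := by simp
  refine ⟨⟨Pre.length, hlen⟩, ?_⟩
  have hget : (Pre ++ a :: rest).get ⟨Pre.length, hlen⟩ = a := by
    simp [List.getElem_append_right (le_refl Pre.length)]
  rw [hget, scheduleTimes_prefix Pre (a :: rest)]
  exact hf

theorem pairsSched_flat :
    ∀ (Qs : List (List (DEdge V) × List (DEdge V))) (Pre : List (List (DEdge V))),
      PairsSched (scheduleTG (Pre ++ Qs.flatMap (fun p => [p.1, p.2]))) Qs
        ((Pre.map tripDuration).sum) := by
  intro Qs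
  induction Qs with
  | nil => intro Pre; trivial
  | cons p Qs' ih =>
    intro Pre
    have hS1 : Pre ++ (p :: Qs').flatMap (fun p => [p.1, p.2])
        = Pre ++ p.1 :: (p.2 :: Qs'.flatMap (fun p => [p.1, p.2])) := by
      simp
    have hS2 : Pre ++ p.1 :: (p.2 :: Qs'.flatMap (fun p => [p.1, p.2]))
        = (Pre ++ [p.1]) ++ p.2 :: Qs'.flatMap (fun p => [p.1, p.2]) := by
      simp
    have hS3 : Pre ++ p.1 :: (p.2 :: Qs'.flatMap (fun p => [p.1, p.2]))
        = (Pre ++ [p.1, p.2]) ++ Qs'.flatMap (fun p => [p.1, p.2]) := by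
      simp
    rw [hS1]
    refine ⟨sched_here Pre p.1 _, ?_, ?_⟩
    · have := sched_here (Pre ++ [p.1]) p.2 (Qs'.flatMap (fun p => [p.1, p.2]))
      rw [← hS2] at this
      refine fun f hf => this f ?_
      have heq : ((Pre ++ [p.1]).map tripDuration).sum
          = (Pre.map tripDuration).sum + tripDuration p.1 := by simp
      rw [heq]
      exact hf
    · have := ih (Pre ++ [p.1, p.2])
      rw [← hS3] at this
      refine pairsSched_time_congr ?_ this
      simp [pairDur]
      try ring

end SchedGlue

section Glue
variable {V : Type} {ι : Type}

theorem pairsSched_append {G : Set (TEdge V)} :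
    ∀ (L1 L2 : List (List (DEdge V) × List (DEdge V))) (t : ℝ),
      PairsSched G (L1 ++ L2) t →
      PairsSched G L1 t ∧ PairsSched G L2 (t + pairsDur L1) := by
  intro L1
  induction L1 with
  | nil =>
    intro L2 t h
    refine ⟨trivial, ?_⟩
    simpa [pairsDur] using h
  | cons p L1' ih =>
    intro L2 t h
    obtain ⟨h1, h2, h3⟩ := h
    obtain ⟨hA, hB⟩ := ih L2 (t + pairDur p) h3
    refine ⟨⟨h1, h2, hA⟩, ?_⟩
    refine pairsSched_time_congr ?_ hB
    simp [pairsDur]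
    ring

/-- A chain of temporal edges, each lying on some trip, yields connectivity in
the node-sharing relation on trips. -/
theorem tpath_rtg {trips : List (List (DEdge V))}
    (hw : ∀ T ∈ trips, T.Chain' fun e f => e.head = f.tail) {τ : ℕ → ℝ}
    {p : List (TEdge V)} {u v : V}
    (h : IsTemporalPath (inducedTG trips τ) p u v) :
    Relation.ReflTransGen (fun a b => ∃ T ∈ trips, a ∈ tripNodes T ∧ b ∈ tripNodes T) u v := by
  obtain ⟨hne, hG, hch, hhd, hlast⟩ := h
  have hstep : ∀ f ∈ p, ∃ T ∈ trips, f.tail ∈ tripNodes T ∧ f.head ∈ tripNodes T := by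
    intro f hf
    obtain ⟨i, hi⟩ := hG f hf
    have hT : trips.get i ∈ trips := by
      simpa using List.get_mem trips i.1 i.2
    obtain ⟨h1, h2⟩ := tedge_nodes (hw _ hT) hi
    exact ⟨trips.get i, hT, h1, h2⟩
  have hch' : p.Chain' fun e f => e.head = f.tail := hch.imp (fun a b h => h.1)
  clear hG hch hne
  induction p generalizing u with
  | nil => simp at hhd
  | cons f p' ih =>
    have hu : u = f.tail := by simpa using hhd.symm
    subst hu
    cases p' with
    | nil =>
      have hv : v = f.head := by simpa using hlast.symm
      subst hv
      exact Relation.ReflTransGen.single (hstep f (by simp))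
    | cons g p'' =>
      have h1 : f.head = g.tail := (List.isChain_cons_cons.mp hch').1
      have hrest := ih (u := g.tail) (by simp)
        (by rw [← List.getLast?_cons_cons (l := p'')]; exact hlast)
        (fun e he => hstep e (List.mem_cons_of_mem _ he)) hch'.tail
      rw [← h1] at hrest
      exact Relation.ReflTransGen.head (hstep f (by simp)) hrest

end Glue

section Glue2
variable {V : Type} {ι : Type}

theorem rtg_idx {N : ι → List V} {l : List ι} (hmem : ∀ i : ι, i ∈ l)
    {step : V → V → Prop}
    (hstep : ∀ a b, step a b → ∃ k : ι, a ∈ N k ∧ b ∈ N k) :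
    ∀ {u v}, Relation.ReflTransGen step u v →
      ∀ i j, u ∈ N i → v ∈ N j → Relation.ReflTransGen (lrel N l) i j := by
  intro u v h
  induction h with
  | refl =>
    intro i j hui huj
    exact Relation.ReflTransGen.single ⟨hmem i, hmem j, ⟨u, hui, huj⟩⟩
  | @tail b c hab hbc ih =>
    intro i j hui hcj
    obtain ⟨k, hbk, hck⟩ := hstep _ _ hbc
    exact (ih i k hui hbk).tail ⟨hmem k, hmem j, ⟨c, hck, hcj⟩⟩

theorem main_thm [Fintype V] (trips : List (List (DEdge V)))
    (hN : IsTripNetwork trips) (hsym : IsSymmetricTrips trips)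
    (hst : StronglyTemporalisable trips) :
    ∃ S : List (List (DEdge V)), S.Perm trips ∧
      (2 / 9 : ℝ) * (Fintype.card V : ℝ) ^ 2 ≤ (reachCount (scheduleTG S) : ℝ) := by
  classical
  obtain ⟨hwalks, hcover⟩ := hN
  obtain ⟨ps, hperm, hrev⟩ := hsym
  rcases isEmpty_or_nonempty V with hV | hV
  · refine ⟨trips, List.Perm.refl _, ?_⟩
    have h0 : Fintype.card V = 0 := Fintype.card_eq_zero
    rw [h0]
    simp
  -- ps is nonempty
  have hm : ps ≠ [] := by
    rintro rfl
    obtain ⟨v⟩ := hV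
    obtain ⟨T, hT, -⟩ := hcover v
    rw [hperm.mem_iff] at hT
    simp at hT
  have hm0 : 0 < ps.length := List.length_pos_iff.mpr hm
  set m := ps.length with hmdef
  set pairAt : Fin m → (List (DEdge V) × List (DEdge V)) := fun i => ps.get i with hpairAt
  set N : Fin m → List V := NI pairAt with hNdef
  have htrips_mem : ∀ p ∈ ps, p.1 ∈ trips ∧ p.2 ∈ trips := by
    intro p hp
    constructor <;> (rw [hperm.mem_iff]; exact List.mem_flatMap.mpr ⟨p, hp, by simp⟩)
  have hgood : ∀ i : Fin m, GoodPair (pairAt i) := by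
    intro i
    have hpi : pairAt i ∈ ps := by simpa [hpairAt] using List.get_mem ps i.1 i.2
    obtain ⟨h1, h2⟩ := htrips_mem _ hpi
    obtain ⟨⟨hne1, hch1⟩, hwt1⟩ := hwalks _ h1
    obtain ⟨⟨hne2, hch2⟩, hwt2⟩ := hwalks _ h2
    exact ⟨hne1, hch1, hch2, fun e he => le_of_lt (hwt1 e he), fun e he => le_of_lt (hwt2 e he),
      hrev _ hpi⟩
  have hNne : ∀ i : Fin m, ∃ x, x ∈ N i :=
    fun i => List.exists_mem_of_ne_nil _ (tripNodes_ne_nil _ (hgood i).1)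
  -- every trip's node list is contained in some pair's node list
  have hTN : ∀ T ∈ trips, ∃ i : Fin m, ∀ x, x ∈ tripNodes T → x ∈ N i := by
    intro T hT
    rw [hperm.mem_iff] at hT
    obtain ⟨p, hp, hTp⟩ := List.mem_flatMap.mp hT
    obtain ⟨k, hk⟩ := List.mem_iff_get.mp hp
    subst hk
    simp only [List.mem_cons, List.mem_singleton] at hTp
    rcases hTp with rfl | hTp
    · exact ⟨k, fun x hx => hx⟩
    · rcases hTp with rfl | hF
      · refine ⟨k, fun x hx => ?_⟩
        have hre := hrev _ hp
        rw [hre] at hx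
        exact List.mem_reverse.mp hx
      · simp at hF
  -- every node lies on some pair
  have hvin : ∀ v : V, ∃ i : Fin m, v ∈ N i := by
    intro v
    obtain ⟨T, hT, e, he, hor⟩ := hcover v
    have hvT : v ∈ tripNodes T := by
      rcases hor with h | h
      · rw [← h]; exact mem_tripNodes_of_tail he
      · rw [← h]; exact mem_tripNodes_of_head (hwalks T hT).1.2 he
    obtain ⟨i, hi⟩ := hTN T hT
    exact ⟨i, hi v hvT⟩
  -- connectivity of the pair family
  set r : Fin m := ⟨0, hm0⟩ with hrdef
  have hconn : ∀ x ∈ List.finRange m,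
      Relation.ReflTransGen (lrel N (List.finRange m)) r x := by
    intro x _
    obtain ⟨u, hu⟩ := hNne r
    obtain ⟨v, hv⟩ := hNne x
    obtain ⟨τ, hreach⟩ := hst u v
    have hstep' : ∀ a b, (∃ T ∈ trips, a ∈ tripNodes T ∧ b ∈ tripNodes T) →
        ∃ k : Fin m, a ∈ N k ∧ b ∈ N k := by
      rintro a b ⟨T, hT, ha, hb⟩
      obtain ⟨k, hk⟩ := hTN T hT
      exact ⟨k, hk a ha, hk b hb⟩
    rcases hreach with heq | ⟨p, hp⟩
    · subst heq
      exact Relation.ReflTransGen.single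
        ⟨List.mem_finRange r, List.mem_finRange x, ⟨u, hu, hv⟩⟩
    · have h1 := tpath_rtg (fun T hT => (hwalks T hT).1.2) hp
      exact rtg_idx (fun i => List.mem_finRange i) hstep' h1 r x hu hv
  -- build a tower ordering and split it
  obtain ⟨t, hpermt, htow⟩ := tower_of_conn N (List.finRange m)
    (List.nodup_finRange m) r (List.mem_finRange r) hconn
  choose idx hidx using hvin
  set w : Fin m → ℝ := fun i => ((Finset.univ.filter fun v => idx v = i).card : ℝ) with hwdef
  have hw0 : ∀ i, 0 ≤ w i := fun i => by positivity
  have hndrt : (r :: t).Nodup := hpermt.nodup_iff.mpr (List.nodup_finRange m)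
  obtain ⟨h, A, B, hpermAB, htA, htB, hsA, hsB⟩ := split_lemma N t r w hw0 hndrt htow
  -- total weight is the number of nodes
  have hwsum : ((r :: t).map w).sum = (Fintype.card V : ℝ) := by
    rw [(hpermt.map w).sum_eq]
    have h1 : ((List.finRange m).map w).sum = ∑ i : Fin m, w i := (Fin.sum_univ_def w).symm
    rw [h1, hwdef]
    have h2 : ∑ i : Fin m, ((Finset.univ.filter fun v => idx v = i).card : ℝ)
        = ((∑ i : Fin m, (Finset.univ.filter fun v => idx v = i).card : ℕ) : ℝ) := by
      push_cast
      rfl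
    rw [h2]
    congr 1
    rw [← Finset.card_eq_sum_card_fiberwise
      (f := idx) (t := (Finset.univ : Finset (Fin m))) (fun x _ => Finset.mem_univ (idx x))]
    exact Finset.card_univ
  -- the schedule: gather along A, ride the hub pair, spread along B (reversed)
  set order : List (Fin m) := A ++ h :: B.reverse with horder
  set Qs : List (List (DEdge V) × List (DEdge V)) := order.map pairAt with hQs
  set S : List (List (DEdge V)) := Qs.flatMap (fun p => [p.1, p.2]) with hSdef
  have hordperm : order.Perm (List.finRange m) := by
    have p1 : List.Perm order (h :: (A ++ B.reverse)) := List.perm_middle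
    have p2 : List.Perm (A ++ B.reverse) (A ++ B) :=
      List.Perm.append_left A (List.reverse_perm B)
    exact p1.trans ((p2.cons h).trans (hpermAB.trans hpermt))
  have hQsperm : Qs.Perm ps := by
    have h1 := hordperm.map pairAt
    have h2 : (List.finRange m).map pairAt = ps := List.map_get_finRange ps
    rw [h2] at h1
    exact h1
  have hSperm : S.Perm trips := by
    have h1 : S.Perm (ps.flatMap fun p => [p.1, p.2]) := hQsperm.flatMap_right _
    exact h1.trans hperm.symm
  -- scheduling facts
  have hps0 : PairsSched (scheduleTG S) Qs 0 := by
    have hh := pairsSched_flat Qs []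
    simpa using hh
  set G := scheduleTG S with hGdef
  have hQsdecomp : Qs = (A.map pairAt) ++ (pairAt h :: (B.reverse.map pairAt)) := by
    rw [hQs, horder]; simp
  obtain ⟨hpsA, hpsRest⟩ := pairsSched_append (A.map pairAt)
    (pairAt h :: (B.reverse.map pairAt)) 0 (by rw [← hQsdecomp]; exact hps0)
  obtain ⟨hs1, hs2, hpsB⟩ := hpsRest
  set tA := pairsDur (A.map pairAt) with htAdef
  -- reaching the hub
  have hgoodA : ∀ i ∈ A, GoodPair (pairAt i) := fun i _ => hgood i
  have htAnn : 0 ≤ tA := pairsDur_nonneg (by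
    intro q hq; obtain ⟨j, hj, rfl⟩ := List.mem_map.mp hq; exact hgood j)
  have hhubA : ∀ u ∈ UU N A ++ N h, ∃ a ∈ N h, RW G 0 u a (0 + tA) := by
    intro u hu
    rcases List.mem_append.mp hu with hu | hu
    · exact gather_lemma pairAt A 0 (N h) hpsA htA hgoodA u hu
    · exact ⟨u, hu, RW.refl u (by linarith)⟩
  have hhub : ∀ a b, a ∈ N h → b ∈ N h →
      RW G (0 + tA) a b (0 + tA + pairDur (pairAt h)) :=
    fun a b ha hb => pair_ride' (hgood h) hs1 hs2 ha hb
  have hspread : ∀ v ∈ UU N B, ∃ b ∈ N h, RW G (0 + tA + pairDur (pairAt h)) b v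
      (0 + tA + pairDur (pairAt h) + pairsDur (B.reverse.map pairAt)) := by
    intro v hv
    have hvrev : v ∈ UU N B.reverse := by
      rcases mem_UU.mp hv with ⟨j, hj, hvj⟩
      exact mem_UU.mpr ⟨j, List.mem_reverse.mpr hj, hvj⟩
    exact spread_lemma pairAt B.reverse _ (N h) hpsB (towerR_of_towerB htB)
      (fun i _ => hgood i) v hvrev
  set X := (UU N A ++ N h).toFinset with hXdef
  set Y := (N h ++ UU N B).toFinset with hYdef
  have hreach : ∀ u ∈ X, ∀ v ∈ Y, TReachable G u v := by
    intro u hu v hv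
    rw [hXdef, List.mem_toFinset] at hu
    rw [hYdef, List.mem_toFinset] at hv
    obtain ⟨a, ha, hrw1⟩ := hhubA u hu
    rcases List.mem_append.mp hv with hv | hv
    · exact ((hrw1.trans (hhub a v ha hv))).treach
    · obtain ⟨b, hb, hrw3⟩ := hspread v hv
      exact ((hrw1.trans (hhub a b ha hb)).trans hrw3).treach
  -- counting
  have hcount : X.card * Y.card ≤ reachCount G := by
    have hinj : Function.Injective (fun q : {x // x ∈ X} × {y // y ∈ Y} =>
        (⟨(q.1.1, q.2.1), hreach q.1.1 q.1.2 q.2.1 q.2.2⟩ :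
          {p : V × V // TReachable G p.1 p.2})) := by
      rintro ⟨⟨x1, hx1⟩, ⟨y1, hy1⟩⟩ ⟨⟨x2, hx2⟩, ⟨y2, hy2⟩⟩ hq
      simp only [Subtype.mk.injEq, Prod.mk.injEq] at hq
      simp [hq.1, hq.2]
    have hle := Nat.card_le_card_of_injective _ hinj
    rw [Nat.card_prod, Nat.card_eq_fintype_card, Nat.card_eq_fintype_card,
      Fintype.card_coe, Fintype.card_coe] at hle
    exact hle
  -- fiber counting
  have hFcard : ∀ (L : List (Fin m)), L.Nodup →
      (L.map w).sum = ((Finset.univ.filter fun v => idx v ∈ L).card : ℝ) := by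
    intro L hnd
    have h1 : (Finset.univ.filter fun v => idx v ∈ L).card
        = ∑ i ∈ L.toFinset, (Finset.univ.filter fun v => idx v = i).card := by
      rw [Finset.card_eq_sum_card_fiberwise (f := idx) (t := L.toFinset)
        (fun x hx => by
          rw [Finset.mem_coe, Finset.mem_filter] at hx
          exact List.mem_toFinset.mpr hx.2)]
      refine Finset.sum_congr rfl (fun i hi => ?_)
      congr 1
      ext v
      simp only [Finset.mem_filter, Finset.mem_univ, true_and]
      constructor
      · rintro ⟨-, hv⟩; exact hv
      · intro hv; exact ⟨hv ▸ List.mem_toFinset.mp hi, hv⟩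
    rw [← List.sum_toFinset w hnd, h1]
    push_cast
    rfl
  have hndhAB : (h :: (A ++ B)).Nodup := hpermAB.nodup_iff.mpr hndrt
  have hndhA : (h :: A).Nodup := by
    have hsub : (h :: A).Sublist (h :: (A ++ B)) :=
      List.Sublist.cons₂ h (List.sublist_append_left A B)
    exact hsub.nodup hndhAB
  have hndhB : (h :: B).Nodup := by
    have hsub : (h :: B).Sublist (h :: (A ++ B)) :=
      List.Sublist.cons₂ h (List.sublist_append_right A B)
    exact hsub.nodup hndhAB
  have hsubX : (Finset.univ.filter fun v => idx v ∈ (h :: A)) ⊆ X := by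
    intro v hvF
    simp only [Finset.mem_filter] at hvF
    rw [hXdef, List.mem_toFinset]
    have hv := hidx v
    rcases List.mem_cons.mp hvF.2 with he | he
    · exact List.mem_append_right _ (he ▸ hv)
    · exact List.mem_append_left _ (mem_UU.mpr ⟨idx v, he, hv⟩)
  have hsubY : (Finset.univ.filter fun v => idx v ∈ (h :: B)) ⊆ Y := by
    intro v hvF
    simp only [Finset.mem_filter] at hvF
    rw [hYdef, List.mem_toFinset]
    have hv := hidx v
    rcases List.mem_cons.mp hvF.2 with he | he
    · exact List.mem_append_left _ (he ▸ hv)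
    · exact List.mem_append_right _ (mem_UU.mpr ⟨idx v, he, hv⟩)
  have hXcard : (A.map w).sum + w h ≤ (X.card : ℝ) := by
    have e1 := hFcard (h :: A) hndhA
    have e3 : ((Finset.univ.filter fun v => idx v ∈ (h :: A)).card : ℝ) ≤ (X.card : ℝ) := by
      exact_mod_cast Finset.card_le_card hsubX
    simp only [List.map_cons, List.sum_cons] at e1
    linarith
  have hYcard : (B.map w).sum + w h ≤ (Y.card : ℝ) := by
    have e1 := hFcard (h :: B) hndhB
    have e3 : ((Finset.univ.filter fun v => idx v ∈ (h :: B)).card : ℝ) ≤ (Y.card : ℝ) := by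
      exact_mod_cast Finset.card_le_card hsubY
    simp only [List.map_cons, List.sum_cons] at e1
    linarith
  -- final arithmetic
  refine ⟨S, hSperm, ?_⟩
  have hsA' : (Fintype.card V : ℝ) / 3 ≤ (A.map w).sum + w h := by
    rw [← hwsum]; exact hsA
  have hsB' : (Fintype.card V : ℝ) / 3 ≤ (B.map w).sum + w h := by
    rw [← hwsum]; exact hsB
  have htotABh : w h + ((A.map w).sum + (B.map w).sum) = (Fintype.card V : ℝ) := by
    rw [← hwsum, ← (hpermAB.map w).sum_eq]
    simp
  have hxy : ((X.card : ℝ)) * (Y.card : ℝ) ≤ (reachCount G : ℝ) := by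
    exact_mod_cast hcount
  have hx0 : (0 : ℝ) ≤ (A.map w).sum + w h := by
    have := list_sum_nonneg (l := A.map w) (by
      intro y hy; obtain ⟨i, _, rfl⟩ := List.mem_map.mp hy; exact hw0 i)
    linarith [hw0 h]
  have hy0 : (0 : ℝ) ≤ (B.map w).sum + w h := by
    have := list_sum_nonneg (l := B.map w) (by
      intro y hy; obtain ⟨i, _, rfl⟩ := List.mem_map.mp hy; exact hw0 i)
    linarith [hw0 h]
  have hprod : ((A.map w).sum + w h) * ((B.map w).sum + w h) ≤ (X.card : ℝ) * (Y.card : ℝ) :=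
    mul_le_mul hXcard hYcard hy0 (le_trans hx0 hXcard)
  have hkey : 2 / 9 * (Fintype.card V : ℝ) ^ 2
      ≤ ((A.map w).sum + w h) * ((B.map w).sum + w h) := by
    nlinarith [mul_nonneg
      (by linarith [hsA'] : (0:ℝ) ≤ (A.map w).sum + w h - (Fintype.card V : ℝ)/3)
      (by linarith [hsB'] : (0:ℝ) ≤ (B.map w).sum + w h - (Fintype.card V : ℝ)/3), hw0 h]
  calc (2 / 9 : ℝ) * (Fintype.card V : ℝ) ^ 2
      ≤ ((A.map w).sum + w h) * ((B.map w).sum + w h) := hkey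
    _ ≤ (X.card : ℝ) * (Y.card : ℝ) := hprod
    _ ≤ (reachCount G : ℝ) := hxy

end Glue2

/-- Theorem 9. A symmetric, strongly temporalisable trip network
on `n` nodes admits a schedule whose `S`-reachability is at least `(2/9)·n²`. -/
theorem symmetric_stronglyTemporalisable_high_reachability
    {V : Type} [Fintype V] (trips : List (List (DEdge V)))
    (hN : IsTripNetwork trips) (hsym : IsSymmetricTrips trips)
    (hst : StronglyTemporalisable trips) :
    ∃ S : List (List (DEdge V)), S.Perm trips ∧
      (2 / 9 : ℝ) * (Fintype.card V : ℝ) ^ 2 ≤ (reachCount (scheduleTG S) : ℝ) :=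
  main_thm trips hN hsym hst
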